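/- arXiv:1301.2130 — 2 statements merged into one kernel-verified Lean document; each statement's English description precedes it below -/
import Mathlib

section
/- Assume the stepsizes are uniform, τ_v = τ for all v ∈ V, with τ ≤ ‖A_v‖₂⁻² for every v ∈ V. Then the DISTA operator Γ is nonexpansive with respect to the Frobenius norm: for all X, Z ∈ ℝ^{n×|V|}, ‖ΓX − ΓZ‖_F ≤ ‖X − Z‖_F. -/
/-!
Write `Γ X = η_α (L X + b)` with `L` linear and `b` independent of `X`. Soft thresholding is
1-Lipschitz in every coordinate, so `‖ΓX − ΓZ‖_F ≤ ‖L (X − Z)‖_F`. Columnwise, `L` is the convex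
combination of `(1 − q) P²` and `q (I − τ A_vᵀ A_v)`. A nonnegative matrix with row and column sums
at most one, such as the uniform-weight matrix of a regular symmetric graph, contracts the Frobenius
norm by Cauchy–Schwarz; and `I − τ AᵀA` is nonexpansive because `τ ‖A‖² ≤ 2`, the descent condition
of a gradient step.
-/

open Finset Filter Matrix

/-- Euclidean norm on `ℝ^k`. -/
noncomputable def enorm2 {k : ℕ} (x : Fin k → ℝ) : ℝ := Real.sqrt (∑ i, (x i) ^ 2)

/-- ℓ¹ norm on `ℝ^k`. -/
noncomputable def onenorm {k : ℕ} (x : Fin k → ℝ) : ℝ := ∑ i, |x i|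

/-- Operator norm of a matrix induced by Euclidean norms. -/
noncomputable def opNorm {m n : ℕ} (A : Matrix (Fin m) (Fin n) ℝ) : ℝ :=
  sSup {c : ℝ | ∃ z : Fin n → ℝ, z ≠ 0 ∧ c = enorm2 (A.mulVec z) / enorm2 z}

/-- Soft thresholding operator `η_α`, acting componentwise. -/
noncomputable def eta {k : ℕ} (α : ℝ) (x : Fin k → ℝ) : Fin k → ℝ :=
  fun i => if α < |x i| then Real.sign (x i) * (|x i| - α) else 0

/-- The uniform-weights stochastic matrix adapted to the graph `E`
(`d` is the common degree). -/
noncomputable def Pmat {V : Type*} (E : V → V → Prop) [DecidableRel E] (d : ℕ) :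
    V → V → ℝ := fun u w => if E u w then 1 / (d : ℝ) else 0

/-- Column `v` of `X Pᵀ`, i.e. the `P`-weighted average `∑ w P_{v,w} x_w`. -/
noncomputable def avg {n : ℕ} {V : Type*} [Fintype V] (P : V → V → ℝ)
    (X : V → Fin n → ℝ) : V → Fin n → ℝ := fun v i => ∑ w, P v w * X w i

/-- Frobenius norm of `X ∈ ℝ^{n×|V|}` (columns indexed by `V`). -/
noncomputable def frobNorm {n : ℕ} {V : Type*} [Fintype V] (X : V → Fin n → ℝ) : ℝ :=
  Real.sqrt (∑ v, ∑ i, (X v i) ^ 2)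

/-- The distributed Lasso functional `F`. -/
noncomputable def Flasso {n m : ℕ} {V : Type*} [Fintype V] (P : V → V → ℝ)
    (A : V → Matrix (Fin m) (Fin n) ℝ) (y : V → Fin m → ℝ)
    (q α : ℝ) (τ : V → ℝ) (X : V → Fin n → ℝ) : ℝ :=
  ∑ v, (q * enorm2 (y v - (A v).mulVec (X v)) ^ 2 + (2 * α / τ v) * onenorm (X v)
    + ((1 - q) / τ v) * ∑ w, P v w * enorm2 (avg P X w - X v) ^ 2)

/-- The DISTA operator `Γ`, defined columnwise. -/
noncomputable def Gamma {n m : ℕ} {V : Type*} [Fintype V] (P : V → V → ℝ)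
    (A : V → Matrix (Fin m) (Fin n) ℝ) (y : V → Fin m → ℝ)
    (q α : ℝ) (τ : V → ℝ) (X : V → Fin n → ℝ) : V → Fin n → ℝ :=
  fun v => eta α (fun i =>
    (1 - q) * avg P (avg P X) v i
      + q * (X v i + τ v * ((A v)ᵀ.mulVec (y v - (A v).mulVec (X v)) i)))

/-- The surrogate functional `F^S`. -/
noncomputable def FS {n m : ℕ} {V : Type*} [Fintype V] (E : V → V → Prop) [DecidableRel E]
    (d : ℕ) (A : V → Matrix (Fin m) (Fin n) ℝ) (y : V → Fin m → ℝ)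
    (q α : ℝ) (τ : V → ℝ) (X C B : V → Fin n → ℝ) : ℝ :=
  ∑ v, (q * enorm2 ((A v).mulVec (X v) - y v) ^ 2 + (2 * α / τ v) * onenorm (X v)
    + ((1 - q) / ((d : ℝ) * τ v)) *
        ∑ w ∈ Finset.univ.filter (fun w => E v w), enorm2 (X v - C w) ^ 2
    + (q / τ v) * enorm2 (X v - B v) ^ 2
    - q * enorm2 ((A v).mulVec (X v - B v)) ^ 2)

open scoped Matrix.Norms.L2Operator

lemma eta_apply_eq_min_max {k : ℕ} {α : ℝ} (hα : 0 ≤ α) (x : Fin k → ℝ) (i : Fin k) :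
    eta α x i = min (x i + α) (max (x i - α) 0) := by
  unfold eta
  rcases lt_trichotomy (x i) 0 with h | h | h
  · rw [abs_of_neg h, Real.sign_of_neg h]
    split_ifs
    · rw [max_eq_right (by linarith), min_eq_left (by linarith)]; ring
    · rw [max_eq_right (by linarith), min_eq_right (by linarith)]
  · simp [h, hα, not_lt.mpr hα]
  · rw [abs_of_pos h, Real.sign_of_pos h]
    split_ifs
    · rw [max_eq_left (by linarith), min_eq_right (by linarith)]; ring
    · rw [max_eq_right (by linarith), min_eq_right (by linarith)]

lemma abs_eta_sub_eta_le {k : ℕ} {α : ℝ} (hα : 0 ≤ α) (x z : Fin k → ℝ) (i : Fin k) :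
    |eta α x i - eta α z i| ≤ |x i - z i| := by
  rw [eta_apply_eq_min_max hα, eta_apply_eq_min_max hα]
  refine (abs_min_sub_min_le_max _ _ _ _).trans (max_le (by simp) ?_)
  exact (abs_max_sub_max_le_max _ _ _ _).trans (max_le (by simp) (by simp))

lemma enorm2_eq_norm {k : ℕ} (x : Fin k → ℝ) :
    enorm2 x = ‖(WithLp.toLp 2 x : EuclideanSpace ℝ (Fin k))‖ := by
  simp [EuclideanSpace.norm_eq, enorm2]

section FrobeniusNorm

variable {n : ℕ} {V : Type*} [Fintype V]

lemma frobNorm_eq_norm (X : V → Fin n → ℝ) :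
    frobNorm X = ‖(WithLp.toLp 2 (Function.uncurry X) : EuclideanSpace ℝ (V × Fin n))‖ := by
  simp [EuclideanSpace.norm_eq, frobNorm, Fintype.sum_prod_type]

lemma frobNorm_eq_sqrt_sum_enorm2_sq (X : V → Fin n → ℝ) :
    frobNorm X = √(∑ v, enorm2 (X v) ^ 2) := by
  simp only [frobNorm, enorm2, Real.sq_sqrt (Finset.sum_nonneg fun _ _ => sq_nonneg _)]

lemma frobNorm_add_le (X Y : V → Fin n → ℝ) :
    frobNorm (X + Y) ≤ frobNorm X + frobNorm Y := by
  have hsplit : (WithLp.toLp 2 (Function.uncurry (X + Y)) : EuclideanSpace ℝ (V × Fin n)) =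
      WithLp.toLp 2 (Function.uncurry X) + WithLp.toLp 2 (Function.uncurry Y) := rfl
  simp only [frobNorm_eq_norm, hsplit]
  exact norm_add_le _ _

lemma frobNorm_smul (c : ℝ) (X : V → Fin n → ℝ) :
    frobNorm (c • X) = |c| * frobNorm X := by
  simp only [frobNorm_eq_norm]
  exact norm_smul c (WithLp.toLp 2 (Function.uncurry X) : EuclideanSpace ℝ (V × Fin n))

lemma frobNorm_le_of_abs_le {X Y : V → Fin n → ℝ} (h : ∀ v i, |X v i| ≤ |Y v i|) :
    frobNorm X ≤ frobNorm Y :=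
  Real.sqrt_le_sqrt <| Finset.sum_le_sum fun v _ => Finset.sum_le_sum fun i _ =>
    sq_le_sq.mpr (h v i)

lemma frobNorm_le_of_enorm2_le {X Y : V → Fin n → ℝ} (h : ∀ v, enorm2 (X v) ≤ enorm2 (Y v)) :
    frobNorm X ≤ frobNorm Y := by
  simp only [frobNorm_eq_sqrt_sum_enorm2_sq]
  exact Real.sqrt_le_sqrt <| Finset.sum_le_sum fun v _ =>
    pow_le_pow_left₀ (Real.sqrt_nonneg _) (h v) 2

end FrobeniusNorm

section Averaging

variable {n : ℕ} {V : Type*} [Fintype V] {P : V → V → ℝ}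

lemma sq_avg_le (hP : ∀ v w, 0 ≤ P v w) (hrow : ∀ v, ∑ w, P v w ≤ 1)
    (X : V → Fin n → ℝ) (v : V) (i : Fin n) :
    avg P X v i ^ 2 ≤ ∑ w, P v w * X w i ^ 2 := by
  have hCS := Finset.sum_sq_le_sum_mul_sum_of_sq_le_mul Finset.univ
    (fun w _ => hP v w) (fun w _ => mul_nonneg (hP v w) (sq_nonneg (X w i)))
    (fun w _ => le_of_eq (by ring) :
      ∀ w ∈ Finset.univ, (P v w * X w i) ^ 2 ≤ P v w * (P v w * X w i ^ 2))
  exact hCS.trans (mul_le_of_le_one_left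
    (Finset.sum_nonneg fun w _ => mul_nonneg (hP v w) (sq_nonneg _)) (hrow v))

lemma frobNorm_avg_le (hP : ∀ v w, 0 ≤ P v w) (hrow : ∀ v, ∑ w, P v w ≤ 1)
    (hcol : ∀ w, ∑ v, P v w ≤ 1) (X : V → Fin n → ℝ) :
    frobNorm (avg P X) ≤ frobNorm X := by
  refine Real.sqrt_le_sqrt ?_
  calc ∑ v, ∑ i, avg P X v i ^ 2
      ≤ ∑ v, ∑ i, ∑ w, P v w * X w i ^ 2 :=
        Finset.sum_le_sum fun v _ => Finset.sum_le_sum fun i _ => sq_avg_le hP hrow X v i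
    _ = ∑ v, ∑ w, P v w * ∑ i, X w i ^ 2 :=
        Finset.sum_congr rfl fun v _ => by rw [Finset.sum_comm]; simp only [Finset.mul_sum]
    _ = ∑ w, (∑ v, P v w) * ∑ i, X w i ^ 2 := by
        rw [Finset.sum_comm]; simp only [Finset.sum_mul]
    _ ≤ ∑ w, ∑ i, X w i ^ 2 :=
        Finset.sum_le_sum fun w _ => mul_le_of_le_one_left
          (Finset.sum_nonneg fun i _ => sq_nonneg _) (hcol w)

end Averaging

open ContinuousLinearMap in
lemma norm_sub_smul_adjoint_apply_le {E F : Type*} [NormedAddCommGroup E] [InnerProductSpace ℝ E]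
    [CompleteSpace E] [NormedAddCommGroup F] [InnerProductSpace ℝ F] [CompleteSpace F]
    (T : E →L[ℝ] F) {τ : ℝ} (hτ0 : 0 ≤ τ) (hτ : τ * ‖T‖ ^ 2 ≤ 2) (x : E) :
    ‖x - τ • adjoint T (T x)‖ ≤ ‖x‖ := by
  have hinner : inner ℝ x (adjoint T (T x)) = ‖T x‖ ^ 2 := by
    rw [adjoint_inner_right, real_inner_self_eq_norm_sq]
  have hbound : ‖adjoint T (T x)‖ ≤ ‖T‖ * ‖T x‖ := by
    simpa only [LinearIsometryEquiv.norm_map] using (adjoint T).le_opNorm (T x)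
  have hexpand : ‖x - τ • adjoint T (T x)‖ ^ 2
      = ‖x‖ ^ 2 - 2 * τ * ‖T x‖ ^ 2 + τ ^ 2 * ‖adjoint T (T x)‖ ^ 2 := by
    rw [norm_sub_sq_real, inner_smul_right, hinner, norm_smul, Real.norm_of_nonneg hτ0]
    ring
  have hgain : τ ^ 2 * ‖adjoint T (T x)‖ ^ 2 ≤ 2 * τ * ‖T x‖ ^ 2 :=
    calc τ ^ 2 * ‖adjoint T (T x)‖ ^ 2 ≤ τ ^ 2 * (‖T‖ * ‖T x‖) ^ 2 := by gcongr
      _ = τ * (τ * ‖T‖ ^ 2) * ‖T x‖ ^ 2 := by ring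
      _ ≤ τ * 2 * ‖T x‖ ^ 2 := by gcongr
      _ = 2 * τ * ‖T x‖ ^ 2 := by ring
  exact (pow_le_pow_iff_left₀ (norm_nonneg _) (norm_nonneg _) two_ne_zero).mp (by linarith)

lemma opNorm_eq_l2_opNorm {m n : ℕ} (A : Matrix (Fin m) (Fin n) ℝ) : opNorm A = ‖A‖ := by
  set T := (Matrix.toEuclideanLin ≪≫ₗ LinearMap.toContinuousLinearMap) A
  have hT : ∀ z : Fin n → ℝ, enorm2 (A *ᵥ z) = ‖T (WithLp.toLp 2 z)‖ := fun z => enorm2_eq_norm _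
  have hratio : ∀ c ∈ {c : ℝ | ∃ z : Fin n → ℝ, z ≠ 0 ∧ c = enorm2 (A *ᵥ z) / enorm2 z},
      c ≤ ‖A‖ := by
    rintro c ⟨z, -, rfl⟩
    rw [hT, enorm2_eq_norm]
    exact div_le_of_le_mul₀ (norm_nonneg _) (norm_nonneg _) (T.le_opNorm _)
  have hnonneg : 0 ≤ opNorm A := Real.sSup_nonneg <| by
    rintro c ⟨z, -, rfl⟩
    exact div_nonneg (Real.sqrt_nonneg _) (Real.sqrt_nonneg _)
  refine le_antisymm (Real.sSup_le hratio (norm_nonneg _)) (T.opNorm_le_bound hnonneg fun x => ?_)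
  obtain rfl | hx := eq_or_ne x 0
  · simp
  have hxpos : 0 < enorm2 (WithLp.ofLp x) := by
    rw [enorm2_eq_norm, WithLp.toLp_ofLp]; exact norm_pos_iff.mpr hx
  have hle : enorm2 (A *ᵥ WithLp.ofLp x) / enorm2 (WithLp.ofLp x) ≤ opNorm A :=
    le_csSup ⟨‖A‖, hratio⟩
      ⟨WithLp.ofLp x, fun h => hx (by simpa using congrArg (WithLp.toLp 2) h), rfl⟩
  rw [div_le_iff₀ hxpos, hT, enorm2_eq_norm, WithLp.toLp_ofLp] at hle
  exact hle

lemma enorm2_sub_smul_transpose_mulVec_le {m n : ℕ} (A : Matrix (Fin m) (Fin n) ℝ) {τ : ℝ}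
    (hτ0 : 0 ≤ τ) (hτ : τ * ‖A‖ ^ 2 ≤ 2) (w : Fin n → ℝ) :
    enorm2 (w - τ • Aᵀ *ᵥ (A *ᵥ w)) ≤ enorm2 w := by
  set T := (Matrix.toEuclideanLin ≪≫ₗ LinearMap.toContinuousLinearMap) A
  have hadj : ContinuousLinearMap.adjoint T =
      (Matrix.toEuclideanLin ≪≫ₗ LinearMap.toContinuousLinearMap) Aᵀ := by
    rw [← Matrix.conjTranspose_eq_transpose_of_trivial]
    simp only [T, LinearEquiv.trans_apply, Matrix.toEuclideanLin_conjTranspose_eq_adjoint,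
      LinearMap.adjoint_toContinuousLinearMap]
  have := norm_sub_smul_adjoint_apply_le T hτ0 hτ (WithLp.toLp 2 w)
  rw [hadj] at this
  rw [enorm2_eq_norm, enorm2_eq_norm]
  exact this

section Dista

variable {n m : ℕ} {V : Type*} [Fintype V]

noncomputable def gammaLinear (P : V → V → ℝ) (A : V → Matrix (Fin m) (Fin n) ℝ) (q : ℝ)
    (τ : V → ℝ) (X : V → Fin n → ℝ) : V → Fin n → ℝ :=
  (1 - q) • avg P (avg P X) + q • fun v => X v - τ v • (A v)ᵀ *ᵥ (A v *ᵥ X v)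

lemma abs_Gamma_sub_Gamma_le (P : V → V → ℝ) (A : V → Matrix (Fin m) (Fin n) ℝ)
    (y : V → Fin m → ℝ) (q : ℝ) {α : ℝ} (hα : 0 ≤ α) (τ : V → ℝ) (X Z : V → Fin n → ℝ)
    (v : V) (i : Fin n) :
    |(Gamma P A y q α τ X - Gamma P A y q α τ Z) v i| ≤ |gammaLinear P A q τ (X - Z) v i| := by
  refine (abs_eta_sub_eta_le hα _ _ i).trans_eq (congrArg abs ?_)
  simp only [gammaLinear, avg, Pi.add_apply, Pi.smul_apply, Pi.sub_apply, smul_eq_mul,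
    Matrix.mulVec_sub, mul_sub, Finset.sum_sub_distrib]
  ring

lemma frobNorm_gammaLinear_le {P : V → V → ℝ} (hP : ∀ v w, 0 ≤ P v w)
    (hrow : ∀ v, ∑ w, P v w ≤ 1) (hcol : ∀ w, ∑ v, P v w ≤ 1)
    (A : V → Matrix (Fin m) (Fin n) ℝ) {q : ℝ} (hq0 : 0 ≤ q) (hq1 : q ≤ 1) {τ : V → ℝ}
    (hτ0 : ∀ v, 0 ≤ τ v) (hτ : ∀ v, τ v * ‖A v‖ ^ 2 ≤ 2) (X : V → Fin n → ℝ) :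
    frobNorm (gammaLinear P A q τ X) ≤ frobNorm X := by
  have havg : frobNorm (avg P (avg P X)) ≤ frobNorm X :=
    (frobNorm_avg_le hP hrow hcol _).trans (frobNorm_avg_le hP hrow hcol X)
  have hgrad : frobNorm (fun v => X v - τ v • (A v)ᵀ *ᵥ (A v *ᵥ X v)) ≤ frobNorm X :=
    frobNorm_le_of_enorm2_le fun v => enorm2_sub_smul_transpose_mulVec_le (A v) (hτ0 v) (hτ v) _
  calc frobNorm (gammaLinear P A q τ X)
      ≤ (1 - q) * frobNorm (avg P (avg P X))
        + q * frobNorm (fun v => X v - τ v • (A v)ᵀ *ᵥ (A v *ᵥ X v)) := by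
        refine (frobNorm_add_le _ _).trans_eq ?_
        rw [frobNorm_smul, frobNorm_smul, abs_of_nonneg (sub_nonneg.mpr hq1), abs_of_nonneg hq0]
    _ ≤ (1 - q) * frobNorm X + q * frobNorm X := by gcongr
    _ = frobNorm X := by ring

end Dista

section UniformWeights

variable {V : Type*} {E : V → V → Prop} [DecidableRel E] {d : ℕ}

lemma Pmat_nonneg (v w : V) : 0 ≤ Pmat E d v w := by
  unfold Pmat
  split_ifs <;> positivity

lemma Pmat_comm (hsymm : ∀ u v, E u v → E v u) (v w : V) : Pmat E d v w = Pmat E d w v := by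
  simp only [Pmat, show E v w ↔ E w v from ⟨hsymm v w, hsymm w v⟩]

lemma sum_Pmat_le_one [Fintype V]
    (hreg : ∀ v, (Finset.univ.filter (fun w => E v w)).card = d) (v : V) :
    ∑ w, Pmat E d v w ≤ 1 := by
  simp only [Pmat]
  rw [← Finset.sum_filter, Finset.sum_const, hreg v, nsmul_eq_mul, mul_one_div]
  exact div_self_le_one _

end UniformWeights

theorem dista_nonexpansive_general
    {n m d : ℕ} {V : Type*} [Fintype V]
    (E : V → V → Prop) [DecidableRel E]
    (hsymm : ∀ u v, E u v → E v u)
    (hreg : ∀ v, (Finset.univ.filter (fun w => E v w)).card = d)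
    (A : V → Matrix (Fin m) (Fin n) ℝ) (y : V → Fin m → ℝ)
    (q α : ℝ) (hq0 : 0 < q) (hq1 : q < 1) (hα : 0 < α)
    (τ : ℝ) (hτpos : 0 < τ)
    (hτ : ∀ v, τ ≤ (opNorm (A v) ^ 2)⁻¹) :
    ∀ X Z : V → Fin n → ℝ,
      frobNorm (Gamma (Pmat E d) A y q α (fun _ => τ) X
          - Gamma (Pmat E d) A y q α (fun _ => τ) Z)
        ≤ frobNorm (X - Z) := by
  intro X Z
  have hcol : ∀ w, ∑ v, Pmat E d v w ≤ 1 := fun w =>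
    (Finset.sum_congr rfl fun v _ => Pmat_comm hsymm v w).trans_le (sum_Pmat_le_one hreg w)
  have hstep : ∀ v, τ * ‖A v‖ ^ 2 ≤ 2 := fun v =>
    calc τ * ‖A v‖ ^ 2 ≤ (‖A v‖ ^ 2)⁻¹ * ‖A v‖ ^ 2 := by
          rw [← opNorm_eq_l2_opNorm]; gcongr; exact hτ v
      _ ≤ 2 := inv_mul_le_one.trans one_le_two
  calc frobNorm (Gamma (Pmat E d) A y q α (fun _ => τ) X
        - Gamma (Pmat E d) A y q α (fun _ => τ) Z)
      ≤ frobNorm (gammaLinear (Pmat E d) A q (fun _ => τ) (X - Z)) :=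
        frobNorm_le_of_abs_le (abs_Gamma_sub_Gamma_le _ A y q hα.le _ X Z)
    _ ≤ frobNorm (X - Z) :=
        frobNorm_gammaLinear_le Pmat_nonneg (sum_Pmat_le_one hreg) hcol A hq0.le hq1.le
          (fun _ => hτpos.le) hstep _

/-- Lemma 8: nonexpansivity. With uniform stepsizes `τ ≤ ‖A_v‖₂⁻²` for every
`v`, the DISTA operator `Γ` is nonexpansive in the Frobenius norm:
`‖ΓX − ΓZ‖_F ≤ ‖X − Z‖_F`. -/
theorem dista_nonexpansive
    {n m d : ℕ} {V : Type*} [Fintype V] [DecidableEq V] [Nonempty V]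
    (E : V → V → Prop) [DecidableRel E]
    (hself : ∀ v, E v v) (hsymm : ∀ u v, E u v → E v u)
    (hreg : ∀ v, (Finset.univ.filter (fun w => E v w)).card = d)
    (A : V → Matrix (Fin m) (Fin n) ℝ) (y : V → Fin m → ℝ)
    (q α : ℝ) (hq0 : 0 < q) (hq1 : q < 1) (hα : 0 < α)
    (τ : ℝ) (hτpos : 0 < τ)
    (hτ : ∀ v, τ ≤ (opNorm (A v) ^ 2)⁻¹) :
    ∀ X Z : V → Fin n → ℝ,
      frobNorm (Gamma (Pmat E d) A y q α (fun _ => τ) X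
          - Gamma (Pmat E d) A y q α (fun _ => τ) Z)
        ≤ frobNorm (X - Z) :=
  dista_nonexpansive_general E hsymm hreg A y q α hq0 hq1 hα τ hτpos hτ
end

section
/- Assume τ_v ≤ ‖A_v‖₂⁻² for every v ∈ V. Then for all X, Z ∈ ℝ^{n×|V|} and every v ∈ V, the columnwise bound ‖(ΓX)_v − (ΓZ)_v‖₂ ≤ (1−q)·(1/d²) Σ_{w∈N_v} Σ_{w'∈N_w} ‖x_{w'} − z_{w'}‖₂ + q ‖x_v − z_v‖₂ holds, where x_u, z_u denote the columns of X and Z. -/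
open Finset Filter Matrix

/-! ### Auxiliary lemmas -/

lemma enorm2_nonneg {k : ℕ} (x : Fin k → ℝ) : 0 ≤ enorm2 x := Real.sqrt_nonneg _

lemma enorm2_sq {k : ℕ} (x : Fin k → ℝ) : enorm2 x ^ 2 = ∑ i, (x i) ^ 2 :=
  Real.sq_sqrt (by positivity)

lemma enorm2_mono {k : ℕ} {x y : Fin k → ℝ} (h : ∀ i, |x i| ≤ |y i|) :
    enorm2 x ≤ enorm2 y := by
  apply Real.sqrt_le_sqrt
  apply Finset.sum_le_sum
  intro i _
  have := h i
  nlinarith [abs_nonneg (x i), sq_abs (x i), sq_abs (y i)]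

lemma sum_mul_le_enorm2 {k : ℕ} (x y : Fin k → ℝ) :
    ∑ i, x i * y i ≤ enorm2 x * enorm2 y := by
  have h := Finset.sum_mul_sq_le_sq_mul_sq Finset.univ x y
  have h2 : (∑ i, x i * y i) ≤ Real.sqrt ((∑ i, x i ^ 2) * ∑ i, y i ^ 2) := by
    have := Real.sqrt_le_sqrt h
    calc ∑ i, x i * y i ≤ |∑ i, x i * y i| := le_abs_self _
      _ = Real.sqrt ((∑ i, x i * y i) ^ 2) := (Real.sqrt_sq_eq_abs _).symm
      _ ≤ _ := this
  rwa [Real.sqrt_mul (by positivity)] at h2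

lemma enorm2_add_le {k : ℕ} (x y : Fin k → ℝ) :
    enorm2 (x + y) ≤ enorm2 x + enorm2 y := by
  have h1 : enorm2 (x + y) = Real.sqrt (∑ i, (x i + y i) ^ 2) := by
    simp [enorm2]
  rw [h1]
  have h2 : ∑ i, (x i + y i) ^ 2 ≤ (enorm2 x + enorm2 y) ^ 2 := by
    have hcs := sum_mul_le_enorm2 x y
    have hx := enorm2_sq x
    have hy := enorm2_sq y
    have : ∑ i, (x i + y i) ^ 2 = (∑ i, x i ^ 2) + 2 * (∑ i, x i * y i) + ∑ i, y i ^ 2 := by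
      rw [Finset.mul_sum, ← Finset.sum_add_distrib, ← Finset.sum_add_distrib]
      apply Finset.sum_congr rfl; intro i _; ring
    rw [this, ← hx, ← hy]; nlinarith
  calc Real.sqrt (∑ i, (x i + y i) ^ 2) ≤ Real.sqrt ((enorm2 x + enorm2 y) ^ 2) :=
        Real.sqrt_le_sqrt h2
    _ = enorm2 x + enorm2 y := by
        have := enorm2_nonneg x; have := enorm2_nonneg y
        rw [Real.sqrt_sq (by linarith)]

lemma enorm2_smul {k : ℕ} (c : ℝ) (x : Fin k → ℝ) :
    enorm2 (c • x) = |c| * enorm2 x := by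
  simp only [enorm2, Pi.smul_apply, smul_eq_mul, mul_pow]
  rw [← Finset.mul_sum, Real.sqrt_mul (by positivity), Real.sqrt_sq_eq_abs]

lemma enorm2_sum_le {k : ℕ} {ι : Type*} (s : Finset ι) (f : ι → Fin k → ℝ) :
    enorm2 (∑ w ∈ s, f w) ≤ ∑ w ∈ s, enorm2 (f w) := by
  induction s using Finset.cons_induction with
  | empty => simp [enorm2]
  | cons a s ha ih =>
      rw [Finset.sum_cons, Finset.sum_cons]
      calc enorm2 (f a + ∑ w ∈ s, f w) ≤ enorm2 (f a) + enorm2 (∑ w ∈ s, f w) :=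
            enorm2_add_le _ _
        _ ≤ _ := by linarith

lemma enorm2_pos {k : ℕ} {x : Fin k → ℝ} (h : x ≠ 0) : 0 < enorm2 x := by
  apply Real.sqrt_pos.mpr
  obtain ⟨i, hi⟩ := Function.ne_iff.mp h
  have h1 : (0:ℝ) < x i ^ 2 := by have := abs_pos.mpr hi; nlinarith [sq_abs (x i)]
  have h2 : x i ^ 2 ≤ ∑ j, x j ^ 2 :=
    Finset.single_le_sum (f := fun j => x j ^ 2) (fun j _ => by positivity) (Finset.mem_univ i)
  linarith

/-- Scalar soft thresholding. -/
noncomputable def etaR (α s : ℝ) : ℝ := if α < |s| then Real.sign s * (|s| - α) else 0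

lemma etaR_eq {α : ℝ} (hα : 0 < α) (s : ℝ) : etaR α s = s - max (-α) (min α s) := by
  unfold etaR
  rcases lt_trichotomy s 0 with hs | hs | hs
  · rw [abs_of_neg hs, Real.sign_of_neg hs]
    split_ifs with h
    · rw [min_eq_right (by linarith), max_eq_left (by linarith)]; ring
    · push_neg at h
      rw [min_eq_right (by linarith), max_eq_right (by linarith)]; ring
  · subst hs; simp [hα, abs_of_nonneg, le_of_lt hα]
  · rw [abs_of_pos hs, Real.sign_of_pos hs]
    split_ifs with h
    · rw [min_eq_left (by linarith), max_eq_right (by linarith)]; ring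
    · push_neg at h
      rw [min_eq_right (by linarith), max_eq_right (by linarith)]; ring

lemma etaR_lip {α : ℝ} (hα : 0 < α) (s t : ℝ) : |etaR α s - etaR α t| ≤ |s - t| := by
  have key : ∀ a b : ℝ, b ≤ a → 0 ≤ etaR α a - etaR α b ∧ etaR α a - etaR α b ≤ a - b := by
    intro a b hab
    rw [etaR_eq hα, etaR_eq hα]
    constructor <;> simp only [max_def, min_def] <;> split_ifs <;> linarith
  rcases le_total t s with h | h
  · obtain ⟨h1, h2⟩ := key s t h
    rw [abs_of_nonneg h1]
    exact h2.trans (le_abs_self _)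
  · obtain ⟨h1, h2⟩ := key t s h
    rw [abs_sub_comm, abs_of_nonneg h1, abs_sub_comm s t]
    exact h2.trans (le_abs_self _)

lemma mulVec_frob_bound {m n : ℕ} (A : Matrix (Fin m) (Fin n) ℝ) (z : Fin n → ℝ) :
    enorm2 (A.mulVec z) ≤ Real.sqrt (∑ i, ∑ j, A i j ^ 2) * enorm2 z := by
  have h1 : ∑ i, (A.mulVec z i) ^ 2 ≤ (∑ i, ∑ j, A i j ^ 2) * ∑ j, z j ^ 2 := by
    rw [Finset.sum_mul]
    apply Finset.sum_le_sum
    intro i _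
    have := Finset.sum_mul_sq_le_sq_mul_sq Finset.univ (fun j => A i j) z
    simpa [Matrix.mulVec, dotProduct] using this
  calc enorm2 (A.mulVec z) = Real.sqrt (∑ i, (A.mulVec z i) ^ 2) := rfl
    _ ≤ Real.sqrt ((∑ i, ∑ j, A i j ^ 2) * ∑ j, z j ^ 2) := Real.sqrt_le_sqrt h1
    _ = Real.sqrt (∑ i, ∑ j, A i j ^ 2) * enorm2 z := by
        rw [Real.sqrt_mul (by positivity)]; rfl

lemma opNorm_nonneg {m n : ℕ} (A : Matrix (Fin m) (Fin n) ℝ) : 0 ≤ opNorm A := by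
  apply Real.sSup_nonneg
  rintro x ⟨z, hz, rfl⟩
  exact div_nonneg (enorm2_nonneg _) (enorm2_nonneg _)

lemma opNorm_bdd {m n : ℕ} (A : Matrix (Fin m) (Fin n) ℝ) :
    BddAbove {c : ℝ | ∃ z : Fin n → ℝ, z ≠ 0 ∧ c = enorm2 (A.mulVec z) / enorm2 z} := by
  refine ⟨Real.sqrt (∑ i, ∑ j, A i j ^ 2), ?_⟩
  rintro x ⟨z, hz, rfl⟩
  rw [div_le_iff₀ (enorm2_pos hz)]
  exact mulVec_frob_bound A z

lemma enorm2_mulVec_le {m n : ℕ} (A : Matrix (Fin m) (Fin n) ℝ) (z : Fin n → ℝ) :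
    enorm2 (A.mulVec z) ≤ opNorm A * enorm2 z := by
  by_cases hz : z = 0
  · subst hz
    rw [Matrix.mulVec_zero A]
    have h0 : enorm2 (0 : Fin m → ℝ) = 0 := by simp [enorm2]
    have h0' : enorm2 (0 : Fin n → ℝ) = 0 := by simp [enorm2]
    rw [h0, h0', mul_zero]
  · have hmem : enorm2 (A.mulVec z) / enorm2 z ∈
        {c : ℝ | ∃ z : Fin n → ℝ, z ≠ 0 ∧ c = enorm2 (A.mulVec z) / enorm2 z} := ⟨z, hz, rfl⟩
    have hle := le_csSup (opNorm_bdd A) hmem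
    have hzpos := enorm2_pos hz
    calc enorm2 (A.mulVec z) = enorm2 (A.mulVec z) / enorm2 z * enorm2 z := by
          field_simp
      _ ≤ opNorm A * enorm2 z := mul_le_mul_of_nonneg_right hle (le_of_lt hzpos)

lemma contraction {m n : ℕ} (A : Matrix (Fin m) (Fin n) ℝ) (τ : ℝ) (hτ0 : 0 < τ)
    (hτ : τ * opNorm A ^ 2 ≤ 1) (u : Fin n → ℝ) :
    enorm2 (u - τ • (Aᵀ.mulVec (A.mulVec u))) ≤ enorm2 u := by
  have hadj : ∀ (ww : Fin m → ℝ) (x : Fin n → ℝ),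
      ∑ i, Aᵀ.mulVec ww i * x i = ∑ j, ww j * A.mulVec x j := by
    intro ww x
    simp only [Matrix.mulVec, dotProduct, Matrix.transpose_apply, Finset.sum_mul,
      Finset.mul_sum]
    rw [Finset.sum_comm]
    apply Finset.sum_congr rfl; intro i _; apply Finset.sum_congr rfl; intro j _; ring
  have hinner : ∑ i, Aᵀ.mulVec (A.mulVec u) i * u i = enorm2 (A.mulVec u) ^ 2 := by
    rw [hadj, enorm2_sq]
    apply Finset.sum_congr rfl; intro j _; ring
  have hMle : enorm2 (Aᵀ.mulVec (A.mulVec u)) ≤ opNorm A * enorm2 (A.mulVec u) := by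
    by_cases hM : Aᵀ.mulVec (A.mulVec u) = 0
    · rw [hM]
      have h0 : enorm2 (0 : Fin n → ℝ) = 0 := by simp [enorm2]
      rw [h0]
      exact mul_nonneg (opNorm_nonneg A) (enorm2_nonneg _)
    · have h1 : enorm2 (Aᵀ.mulVec (A.mulVec u)) ^ 2
          = ∑ j, (A.mulVec u) j * A.mulVec (Aᵀ.mulVec (A.mulVec u)) j := by
        rw [enorm2_sq, ← hadj]
        apply Finset.sum_congr rfl; intro i _; ring
      have h2 := sum_mul_le_enorm2 (A.mulVec u) (A.mulVec (Aᵀ.mulVec (A.mulVec u)))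
      have h3 := enorm2_mulVec_le A (Aᵀ.mulVec (A.mulVec u))
      have hMpos := enorm2_pos hM
      nlinarith [enorm2_nonneg (A.mulVec u)]
  have h7 : (0:ℝ) ≤ enorm2 (A.mulVec u) ^ 2 := by positivity
  have hL : enorm2 (u - τ • (Aᵀ.mulVec (A.mulVec u))) ^ 2 ≤ enorm2 u ^ 2 := by
    rw [enorm2_sq, enorm2_sq]
    have hexp : ∑ i, (u i - τ * Aᵀ.mulVec (A.mulVec u) i) ^ 2 =
        ∑ i, u i ^ 2 - 2 * τ * (∑ i, Aᵀ.mulVec (A.mulVec u) i * u i)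
          + τ ^ 2 * ∑ i, Aᵀ.mulVec (A.mulVec u) i ^ 2 := by
      rw [Finset.mul_sum, Finset.mul_sum, ← Finset.sum_sub_distrib, ← Finset.sum_add_distrib]
      apply Finset.sum_congr rfl; intro i _; ring
    have heq : ∑ i, (u i - (τ • Aᵀ.mulVec (A.mulVec u)) i) ^ 2
        = ∑ i, (u i - τ * Aᵀ.mulVec (A.mulVec u) i) ^ 2 := by
      apply Finset.sum_congr rfl; intro i _; simp
    have h5 : ∑ i, Aᵀ.mulVec (A.mulVec u) i ^ 2 = enorm2 (Aᵀ.mulVec (A.mulVec u)) ^ 2 :=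
      (enorm2_sq _).symm
    have h6 : enorm2 (Aᵀ.mulVec (A.mulVec u)) ^ 2 ≤ opNorm A ^ 2 * enorm2 (A.mulVec u) ^ 2 := by
      nlinarith [enorm2_nonneg (Aᵀ.mulVec (A.mulVec u)), enorm2_nonneg (A.mulVec u),
        opNorm_nonneg A]
    calc ∑ i, (u i - (τ • Aᵀ.mulVec (A.mulVec u)) i) ^ 2
        = ∑ i, u i ^ 2 - 2 * τ * (∑ i, Aᵀ.mulVec (A.mulVec u) i * u i)
          + τ ^ 2 * ∑ i, Aᵀ.mulVec (A.mulVec u) i ^ 2 := by rw [heq, hexp]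
      _ ≤ ∑ i, u i ^ 2 := by
          rw [hinner, h5]
          nlinarith [mul_le_mul_of_nonneg_left h6 (by positivity : (0:ℝ) ≤ τ ^ 2),
            mul_le_mul_of_nonneg_right hτ (mul_nonneg hτ0.le h7), hτ0.le, h7]
  have h8 := enorm2_nonneg (u - τ • (Aᵀ.mulVec (A.mulVec u)))
  have h9 := enorm2_nonneg u
  nlinarith

/-- columnwise nonexpansivity bound. If `τ_v ≤ ‖A_v‖₂⁻²` for every `v`, then
for all `X`, `Z` and every node `v`,
`‖(ΓX)_v − (ΓZ)_v‖₂ ≤ (1−q)(1/d²) ∑_{w∈N_v} ∑_{w'∈N_w} ‖x_{w'} − z_{w'}‖₂ + q‖x_v − z_v‖₂`. -/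
theorem dista_columnwise_bound
    {n m d : ℕ} {V : Type*} [Fintype V] [DecidableEq V] [Nonempty V]
    (E : V → V → Prop) [DecidableRel E]
    (hself : ∀ v, E v v) (hsymm : ∀ u v, E u v → E v u)
    (hreg : ∀ v, (Finset.univ.filter (fun w => E v w)).card = d)
    (A : V → Matrix (Fin m) (Fin n) ℝ) (y : V → Fin m → ℝ)
    (q α : ℝ) (hq0 : 0 < q) (hq1 : q < 1) (hα : 0 < α)
    (τ : V → ℝ) (hτpos : ∀ v, 0 < τ v)
    (hτ : ∀ v, τ v ≤ (opNorm (A v) ^ 2)⁻¹) :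
    ∀ (X Z : V → Fin n → ℝ) (v : V),
      enorm2 (Gamma (Pmat E d) A y q α τ X v - Gamma (Pmat E d) A y q α τ Z v)
        ≤ (1 - q) * (1 / (d : ℝ) ^ 2) *
            (∑ w ∈ Finset.univ.filter (fun w => E v w),
              ∑ w' ∈ Finset.univ.filter (fun w' => E w w'), enorm2 (X w' - Z w'))
          + q * enorm2 (X v - Z v) := by

  intro X Z v
  set P := Pmat E d with hP
  -- the two vectors
  set Dv : Fin n → ℝ := fun i => avg P (avg P X) v i - avg P (avg P Z) v i with hDv
  set W : Fin n → ℝ :=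
    (X v - Z v) - τ v • ((A v)ᵀ.mulVec ((A v).mulVec (X v - Z v))) with hW
  -- Step 1: pointwise Lipschitz estimate
  have hstep1 : enorm2 (Gamma P A y q α τ X v - Gamma P A y q α τ Z v)
      ≤ enorm2 ((1 - q) • Dv + q • W) := by
    apply enorm2_mono
    intro i
    have harg : ((1 - q) * avg P (avg P X) v i
          + q * (X v i + τ v * ((A v)ᵀ.mulVec (y v - (A v).mulVec (X v)) i)))
        - ((1 - q) * avg P (avg P Z) v i
          + q * (Z v i + τ v * ((A v)ᵀ.mulVec (y v - (A v).mulVec (Z v)) i)))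
        = ((1 - q) • Dv + q • W) i := by
      have hfun : (A v)ᵀ.mulVec (y v - (A v).mulVec (X v))
          - (A v)ᵀ.mulVec (y v - (A v).mulVec (Z v))
          = -((A v)ᵀ.mulVec ((A v).mulVec (X v - Z v))) := by
        rw [← Matrix.mulVec_sub,
          show (y v - (A v).mulVec (X v)) - (y v - (A v).mulVec (Z v))
            = -((A v).mulVec (X v - Z v)) by rw [Matrix.mulVec_sub]; abel,
          Matrix.mulVec_neg]
      have h : ((A v)ᵀ.mulVec (y v - (A v).mulVec (X v))) i
          - ((A v)ᵀ.mulVec (y v - (A v).mulVec (Z v))) i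
          = -(((A v)ᵀ.mulVec ((A v).mulVec (X v - Z v))) i) := by
        have := congrFun hfun i
        simpa using this
      simp only [hDv, hW, Pi.add_apply, Pi.smul_apply, Pi.sub_apply, smul_eq_mul]
      linear_combination q * τ v * h
    calc |(Gamma P A y q α τ X v - Gamma P A y q α τ Z v) i|
        = |etaR α ((1 - q) * avg P (avg P X) v i
            + q * (X v i + τ v * ((A v)ᵀ.mulVec (y v - (A v).mulVec (X v)) i)))
          - etaR α ((1 - q) * avg P (avg P Z) v i
            + q * (Z v i + τ v * ((A v)ᵀ.mulVec (y v - (A v).mulVec (Z v)) i)))| := rfl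
      _ ≤ |((1 - q) * avg P (avg P X) v i
            + q * (X v i + τ v * ((A v)ᵀ.mulVec (y v - (A v).mulVec (X v)) i)))
          - ((1 - q) * avg P (avg P Z) v i
            + q * (Z v i + τ v * ((A v)ᵀ.mulVec (y v - (A v).mulVec (Z v)) i)))| :=
          etaR_lip hα _ _
      _ = |((1 - q) • Dv + q • W) i| := by rw [harg]
  -- Step 2: triangle inequality
  have hq1' : (0:ℝ) ≤ 1 - q := by linarith
  have hstep2 : enorm2 ((1 - q) • Dv + q • W) ≤ (1 - q) * enorm2 Dv + q * enorm2 W := by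
    calc enorm2 ((1 - q) • Dv + q • W) ≤ enorm2 ((1 - q) • Dv) + enorm2 (q • W) :=
          enorm2_add_le _ _
      _ = (1 - q) * enorm2 Dv + q * enorm2 W := by
          rw [enorm2_smul, enorm2_smul, abs_of_nonneg hq1', abs_of_nonneg hq0.le]
  -- Step 3: contraction bound for W
  have hLpos : 0 < opNorm (A v) := by
    rcases lt_or_eq_of_le (opNorm_nonneg (A v)) with h | h
    · exact h
    · exfalso
      have := hτ v
      rw [← h] at this
      simp at this
      linarith [hτpos v]
  have hτL : τ v * opNorm (A v) ^ 2 ≤ 1 := by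
    have h2 : (0:ℝ) < opNorm (A v) ^ 2 := by positivity
    have := mul_le_mul_of_nonneg_right (hτ v) h2.le
    rwa [inv_mul_cancel₀ (ne_of_gt h2)] at this
  have hstep3 : enorm2 W ≤ enorm2 (X v - Z v) :=
    contraction (A v) (τ v) (hτpos v) hτL (X v - Z v)
  -- Step 4: averaging bound for Dv
  have hDrep : Dv = ∑ w ∈ Finset.univ.filter (fun w => E v w),
      ∑ w' ∈ Finset.univ.filter (fun w' => E w w'),
        ((d:ℝ)⁻¹ * (d:ℝ)⁻¹) • (X w' - Z w') := by
    funext i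
    simp only [hDv, Finset.sum_apply, Pi.smul_apply, Pi.sub_apply, smul_eq_mul,
      avg, hP, Pmat, Finset.sum_filter]
    rw [← Finset.sum_sub_distrib]
    apply Finset.sum_congr rfl
    intro w _
    split_ifs with h
    · rw [← mul_sub, ← Finset.sum_sub_distrib, Finset.mul_sum]
      apply Finset.sum_congr rfl
      intro w' _
      split_ifs with h'
      · simp [one_div]; ring
      · simp
    · simp
  have hstep4 : enorm2 Dv ≤ (1 / (d:ℝ) ^ 2) *
      (∑ w ∈ Finset.univ.filter (fun w => E v w),
        ∑ w' ∈ Finset.univ.filter (fun w' => E w w'), enorm2 (X w' - Z w')) := by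
    rw [hDrep]
    calc enorm2 (∑ w ∈ Finset.univ.filter (fun w => E v w),
          ∑ w' ∈ Finset.univ.filter (fun w' => E w w'),
            ((d:ℝ)⁻¹ * (d:ℝ)⁻¹) • (X w' - Z w'))
        ≤ ∑ w ∈ Finset.univ.filter (fun w => E v w),
            enorm2 (∑ w' ∈ Finset.univ.filter (fun w' => E w w'),
              ((d:ℝ)⁻¹ * (d:ℝ)⁻¹) • (X w' - Z w')) := enorm2_sum_le _ _
      _ ≤ ∑ w ∈ Finset.univ.filter (fun w => E v w),
            ∑ w' ∈ Finset.univ.filter (fun w' => E w w'),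
              enorm2 (((d:ℝ)⁻¹ * (d:ℝ)⁻¹) • (X w' - Z w')) :=
          Finset.sum_le_sum fun w _ => enorm2_sum_le _ _
      _ = (1 / (d:ℝ) ^ 2) * (∑ w ∈ Finset.univ.filter (fun w => E v w),
            ∑ w' ∈ Finset.univ.filter (fun w' => E w w'), enorm2 (X w' - Z w')) := by
          rw [Finset.mul_sum]
          apply Finset.sum_congr rfl
          intro w _
          rw [Finset.mul_sum]
          apply Finset.sum_congr rfl
          intro w' _
          rw [enorm2_smul, abs_of_nonneg (by positivity)]
          congr 1
          rw [one_div, sq]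
          rw [mul_inv]
  -- assemble
  calc enorm2 (Gamma P A y q α τ X v - Gamma P A y q α τ Z v)
      ≤ (1 - q) * enorm2 Dv + q * enorm2 W := hstep1.trans hstep2
    _ ≤ (1 - q) * ((1 / (d:ℝ) ^ 2) *
          (∑ w ∈ Finset.univ.filter (fun w => E v w),
            ∑ w' ∈ Finset.univ.filter (fun w' => E w w'), enorm2 (X w' - Z w')))
        + q * enorm2 (X v - Z v) := by
        apply add_le_add
        · exact mul_le_mul_of_nonneg_left hstep4 hq1'
        · exact mul_le_mul_of_nonneg_left hstep3 hq0.le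
    _ = (1 - q) * (1 / (d : ℝ) ^ 2) *
          (∑ w ∈ Finset.univ.filter (fun w => E v w),
            ∑ w' ∈ Finset.univ.filter (fun w' => E w w'), enorm2 (X w' - Z w'))
        + q * enorm2 (X v - Z v) := by ring
end
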